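/- Let p > 0 and let v : [1,∞) → [0,∞) be a C² nonincreasing convex solution of −v'' − ((d−1)/r) v' + C v^s = 0 on (1,∞), with s = (p−1)/(p+1) ∈ (−1,1), C > 0, d ≥ 1, such that v, v', v'' → 0 at infinity. Then −v'(r) ≥ (2C/(s+1))^{1/2} v(r)^{(s+1)/2} for all r ∈ (1,∞). -/

import Mathlib

open Filter Set Topology

/-! Multiplying the equation by `v'` shows that the energy `E = v'²/2 − C v^{s+1}/(s+1)` satisfies
`E' = −((d−1)/r) v'² ≤ 0` wherever `v ≠ 0` (at a zero of `v`, `v^{s+1}` need not be differentiable).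
So `E` decreases from `r` up to the first zero of `v`, where `E = v'²/2 ≥ 0`, or, if there is none,
up to infinity, where `E → 0`. Hence `E(r) ≥ 0`, which is the estimate since `v' ≤ 0`. -/

noncomputable def energy (C s : ℝ) (f f' : ℝ → ℝ) (x : ℝ) : ℝ :=
  f' x ^ 2 / 2 - C / (s + 1) * f x ^ (s + 1)

theorem hasDerivAt_energy {C s a f'' x : ℝ} {f f' : ℝ → ℝ} (hs : s + 1 ≠ 0)
    (hf : HasDerivAt f (f' x) x) (hf' : HasDerivAt f' f'' x) (hfx : f x ≠ 0)
    (hode : f'' = C * f x ^ s - a * f' x) :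
    HasDerivAt (energy C s f f') (-a * f' x ^ 2) x := by
  have hkin : HasDerivAt (fun y ↦ f' y ^ 2 / 2) (f' x * f'') x :=
    ((hf'.pow 2).div_const 2).congr_deriv (by ring)
  have hpot := (hf.rpow_const (p := s + 1) (Or.inl hfx)).const_mul (C / (s + 1))
  refine (hkin.sub hpot).congr_deriv ?_
  rw [add_sub_cancel_right, hode]
  field_simp
  ring

theorem tendsto_energy_atTop {C s : ℝ} {f f' : ℝ → ℝ} (hs : 0 < s + 1)
    (hf : Tendsto f atTop (𝓝 0)) (hf' : Tendsto f' atTop (𝓝 0)) :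
    Tendsto (energy C s f f') atTop (𝓝 0) := by
  have hpow := hf.rpow_const (p := s + 1) (Or.inr hs.le)
  rw [Real.zero_rpow hs.ne'] at hpow
  have hlim := ((hf'.pow 2).div_const 2).sub (hpow.const_mul (C / (s + 1)))
  rwa [zero_pow two_ne_zero, zero_div, mul_zero, sub_zero] at hlim

theorem energy_nonneg_of_eq_zero {C s x : ℝ} {f f' : ℝ → ℝ} (hs : s + 1 ≠ 0) (hfx : f x = 0) :
    0 ≤ energy C s f f' x := by
  rw [energy, hfx, Real.zero_rpow hs, mul_zero, sub_zero]
  positivity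

theorem nonneg_of_tendsto_zero_of_hasDerivAt_nonpos_off_zeros {E E' g : ℝ → ℝ} {r : ℝ}
    (hE : ContinuousOn E (Ici r)) (hg : ContinuousOn g (Ici r))
    (hE' : ∀ x, r < x → g x ≠ 0 → HasDerivAt E (E' x) x) (hE'_nonpos : ∀ x, r < x → E' x ≤ 0)
    (hzero : ∀ x, r ≤ x → g x = 0 → 0 ≤ E x) (hlim : Tendsto E atTop (𝓝 0)) : 0 ≤ E r := by
  have antitone_of {D : Set ℝ} (hD : Convex ℝ D) (hDr : D ⊆ Ici r)
      (hDg : ∀ x ∈ interior D, r < x ∧ g x ≠ 0) : AntitoneOn E D :=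
    antitoneOn_of_hasDerivWithinAt_nonpos hD (hE.mono hDr)
      (fun x hx ↦ (hE' x (hDg x hx).1 (hDg x hx).2).hasDerivWithinAt)
      (fun x hx ↦ hE'_nonpos x (hDg x hx).1)
  set S := Ici r ∩ g ⁻¹' {0}
  rcases S.eq_empty_or_nonempty with hS | hS
  · have hanti : AntitoneOn E (Ici r) := antitone_of (convex_Ici r) subset_rfl fun x hx ↦ by
      rw [interior_Ici] at hx
      exact ⟨hx, fun h ↦ hS.subset ⟨mem_Ici.2 hx.le, h⟩⟩
    refine le_of_tendsto hlim ?_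
    filter_upwards [eventually_ge_atTop r] with y hy
    exact hanti self_mem_Ici hy hy
  · have hSclosed : IsClosed S := hg.preimage_isClosed_of_isClosed isClosed_Ici isClosed_singleton
    have hSbdd : BddBelow S := ⟨r, fun _ hy ↦ hy.1⟩
    obtain ⟨hr₀, hg₀⟩ : sInf S ∈ S := hSclosed.csInf_mem hS hSbdd
    have hanti : AntitoneOn E (Icc r (sInf S)) :=
      antitone_of (convex_Icc _ _) Icc_subset_Ici_self fun x hx ↦ by
        rw [interior_Icc] at hx
        exact ⟨hx.1, fun h ↦ (csInf_le hSbdd ⟨mem_Ici.2 hx.1.le, h⟩).not_gt hx.2⟩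
    exact (hzero _ hr₀ hg₀).trans
      (hanti (left_mem_Icc.2 hr₀) (right_mem_Icc.2 hr₀) hr₀)

theorem sqrt_mul_rpow_half_le {k b c t : ℝ} (hb : 0 ≤ b) (hc : 0 ≤ c) (h : k * b ^ t ≤ c ^ 2) :
    √k * b ^ (t / 2) ≤ c := by
  have hhalf : b ^ (t / 2) = √(b ^ t) := by
    rw [Real.sqrt_eq_rpow, ← Real.rpow_mul hb, mul_one_div]
  rw [hhalf, ← Real.sqrt_mul' _ (by positivity)]
  exact Real.sqrt_le_iff.2 ⟨hc, h⟩

theorem energy_nonneg_of_ode {C s r : ℝ} {U : Set ℝ} {v a : ℝ → ℝ} (hs : 0 < s + 1)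
    (hU : IsOpen U) (hrU : Ici r ⊆ U) (hv : ContDiffOn ℝ 2 v U) (ha : ∀ x, r < x → 0 ≤ a x)
    (hode : ∀ x, r < x → deriv (deriv v) x = C * v x ^ s - a x * deriv v x)
    (hv0 : Tendsto v atTop (𝓝 0)) (hv1 : Tendsto (deriv v) atTop (𝓝 0)) :
    0 ≤ energy C s v (deriv v) r := by
  have hv' : ContDiffOn ℝ 1 (deriv v) U := hv.deriv_of_isOpen hU (by norm_num)
  have hdv {x : ℝ} (hx : r < x) : HasDerivAt v (deriv v x) x :=
    ((hv.contDiffAt (hU.mem_nhds (hrU hx.le))).differentiableAt (by norm_num)).hasDerivAt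
  have hdv' {x : ℝ} (hx : r < x) : HasDerivAt (deriv v) (deriv (deriv v) x) x :=
    ((hv'.contDiffAt (hU.mem_nhds (hrU hx.le))).differentiableAt one_ne_zero).hasDerivAt
  refine nonneg_of_tendsto_zero_of_hasDerivAt_nonpos_off_zeros (g := v)
    (E' := fun x ↦ -a x * deriv v x ^ 2) ?_ (hv.continuousOn.mono hrU)
    (fun x hx hvx ↦ hasDerivAt_energy hs.ne' (hdv hx) (hdv' hx) hvx (hode x hx))
    (fun x hx ↦ by nlinarith [ha x hx, sq_nonneg (deriv v x)])
    (fun x _ hvx ↦ energy_nonneg_of_eq_zero hs.ne' hvx) (tendsto_energy_atTop hs hv0 hv1)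
  exact (((hv'.continuousOn.mono hrU).pow 2).div_const 2).sub
    (continuousOn_const.mul ((hv.continuousOn.mono hrU).rpow_const fun _ _ ↦ Or.inr hs.le))

theorem stmt12_general (d : ℕ) (hd : 1 ≤ d) (p C : ℝ) (hp : 0 < p)
    (v : ℝ → ℝ) (hsm : ContDiffOn ℝ 2 v (Set.Ici 1))
    (hpos : ∀ r ∈ Set.Ici (1 : ℝ), 0 ≤ v r)
    (hmono : AntitoneOn v (Set.Ici 1))
    (hode : ∀ r ∈ Set.Ioi (1 : ℝ),
      -(deriv (deriv v) r) - (((d : ℝ) - 1) / r) * deriv v r +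
        C * v r ^ ((p - 1) / (p + 1)) = 0)
    (hv0 : Tendsto v atTop (nhds 0))
    (hv1 : Tendsto (deriv v) atTop (nhds 0)) :
    ∀ r ∈ Set.Ioi (1 : ℝ),
      Real.sqrt (2 * C / ((p - 1) / (p + 1) + 1)) *
          v r ^ (((p - 1) / (p + 1) + 1) / 2) ≤ -(deriv v r) := by
  intro r hr
  have hs : 0 < (p - 1) / (p + 1) + 1 := by
    rw [show (p - 1) / (p + 1) + 1 = 2 * p / (p + 1) by field_simp; ring]
    positivity
  have hfriction (x : ℝ) (hx : r < x) : 0 ≤ ((d : ℝ) - 1) / x :=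
    div_nonneg (sub_nonneg.2 (Nat.one_le_cast.2 hd)) (by linarith [mem_Ioi.1 hr])
  have henergy := energy_nonneg_of_ode (C := C) hs isOpen_Ioi (Ici_subset_Ioi.2 hr)
    (hsm.mono Ioi_subset_Ici_self) hfriction
    (fun x hx ↦ by linarith [hode x (lt_trans hr hx)]) hv0 hv1
  have hv'r : deriv v r ≤ 0 := by
    rw [← derivWithin_of_isOpen isOpen_Ioi hr]
    exact (hmono.mono Ioi_subset_Ici_self).derivWithin_nonpos
  refine sqrt_mul_rpow_half_le (hpos r (mem_Ici.2 hr.le)) (neg_nonneg.2 hv'r) ?_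
  rw [energy] at henergy
  linear_combination 2 * henergy

/-- ODE estimate. If `v ≥ 0` is a nonincreasing convex `C²` solution of
`−v'' − ((d−1)/r) v' + C v^s = 0` on `(1,∞)` with `v, v', v'' → 0` at infinity,
where `s = (p−1)/(p+1)`, then `−v'(r) ≥ (2C/(s+1))^{1/2} v(r)^{(s+1)/2}` on `(1,∞)`. -/
theorem stmt12 (d : ℕ) (hd : 1 ≤ d) (p C : ℝ) (hp : 0 < p) (hC : 0 < C)
    (v : ℝ → ℝ) (hsm : ContDiffOn ℝ 2 v (Set.Ici 1))
    (hpos : ∀ r ∈ Set.Ici (1 : ℝ), 0 ≤ v r)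
    (hmono : AntitoneOn v (Set.Ici 1))
    (hconv : ConvexOn ℝ (Set.Ici 1) v)
    (hode : ∀ r ∈ Set.Ioi (1 : ℝ),
      -(deriv (deriv v) r) - (((d : ℝ) - 1) / r) * deriv v r +
        C * v r ^ ((p - 1) / (p + 1)) = 0)
    (hv0 : Tendsto v atTop (nhds 0))
    (hv1 : Tendsto (deriv v) atTop (nhds 0))
    (hv2 : Tendsto (deriv (deriv v)) atTop (nhds 0)) :
    ∀ r ∈ Set.Ioi (1 : ℝ),
      Real.sqrt (2 * C / ((p - 1) / (p + 1) + 1)) *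
          v r ^ (((p - 1) / (p + 1) + 1) / 2) ≤ -(deriv v r) :=
  stmt12_general d hd p C hp v hsm hpos hmono hode hv0 hv1
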